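/- For every μ ∈ (0, 1) and all γ₁, γ₂ > 0, the Kullback–Leibler divergence between the Bernoulli distributions with parameters f(μ, γ₁) and f(μ, γ₂) satisfies D(f(μ, γ₁) ‖ f(μ, γ₂)) ≥ (√γ₁ − √γ₂)² · μ(1 − μ) / max{(γ₁ + γ₂)/2, 1}². -/

import Mathlib

/-- The declaration probability function `f(μ, γ) = γμ/(1 + (γ − 1)μ)`. -/
noncomputable def declProb (μ γ : ℝ) : ℝ := γ * μ / (1 + (γ - 1) * μ)

/-- Kullback–Leibler divergence between `Bernoulli(p)` and `Bernoulli(q)`: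
`D(p ‖ q) = p·log(p/q) + (1 − p)·log((1 − p)/(1 − q))`. -/
noncomputable def klBernoulli (p q : ℝ) : ℝ :=
  p * Real.log (p / q) + (1 - p) * Real.log ((1 - p) / (1 - q))

/-!
The Bhattacharyya coefficient `B = √(pq) + √((1-p)(1-q))` controls the divergence through
`D(p ‖ q) ≥ 2(1 - B) ≥ 1 - B²`. For `p = f(μ, γ₁)`, `q = f(μ, γ₂)` with denominators
`Dᵢ = 1 + (γᵢ - 1)μ`, one finds `B = (μ√γ₁√γ₂ + 1 - μ) / √(D₁D₂)`, and since
`D₁D₂ = (1 - μ + μγ₁)(1 - μ + μγ₂)` this gives `1 - B² = μ(1 - μ)(√γ₁ - √γ₂)² / (D₁D₂)`.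
Finally `D₁D₂ ≤ ((D₁ + D₂)/2)²`, and `(D₁ + D₂)/2` is a convex combination of `1` and
`(γ₁ + γ₂)/2`, hence at most their maximum.
-/

open Real

noncomputable def bhattacharyyaBernoulli (p q : ℝ) : ℝ :=
  √(p * q) + √((1 - p) * (1 - q))

theorem two_mul_sub_two_mul_sqrt_le_mul_log_div {a b : ℝ} (ha : 0 < a) (hb : 0 < b) :
    2 * a - 2 * √(a * b) ≤ a * log (a / b) := by
  have hsa : 0 < √a := sqrt_pos.mpr ha
  have hsb : 0 < √b := sqrt_pos.mpr hb
  have hlog : log (a / b) = -2 * log (√b / √a) := by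
    rw [← sqrt_div' _ ha.le, log_sqrt (by positivity), log_div hb.ne' ha.ne',
      log_div ha.ne' hb.ne']
    ring
  have hle : log (√b / √a) ≤ √b / √a - 1 := log_le_sub_one_of_pos (by positivity)
  have hmul : a * (√b / √a) = √(a * b) := by
    rw [sqrt_mul ha.le]
    nth_rewrite 1 [← mul_self_sqrt ha.le]
    field_simp
  rw [hlog]
  nlinarith

theorem two_mul_one_sub_bhattacharyyaBernoulli_le_klBernoulli {p q : ℝ}
    (hp : p ∈ Set.Ioo (0 : ℝ) 1) (hq : q ∈ Set.Ioo (0 : ℝ) 1) :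
    2 * (1 - bhattacharyyaBernoulli p q) ≤ klBernoulli p q := by
  have h₀ := two_mul_sub_two_mul_sqrt_le_mul_log_div hp.1 hq.1
  have h₁ := two_mul_sub_two_mul_sqrt_le_mul_log_div (sub_pos.mpr hp.2) (sub_pos.mpr hq.2)
  rw [bhattacharyyaBernoulli, klBernoulli]
  linarith

section declProb

variable {μ : ℝ}

theorem one_add_sub_one_mul_pos (hμ : μ ∈ Set.Icc (0 : ℝ) 1) {γ : ℝ} (hγ : 0 < γ) :
    0 < 1 + (γ - 1) * μ := by
  rcases hμ.1.eq_or_lt with rfl | hμ₀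
  · norm_num
  · nlinarith [hμ.2]

theorem one_sub_declProb (γ : ℝ) (hD : 1 + (γ - 1) * μ ≠ 0) :
    1 - declProb μ γ = (1 - μ) / (1 + (γ - 1) * μ) := by
  rw [declProb, eq_div_iff hD, sub_mul, div_mul_cancel₀ _ hD]
  ring

theorem declProb_mem_Ioo (hμ : μ ∈ Set.Ioo (0 : ℝ) 1) {γ : ℝ} (hγ : 0 < γ) :
    declProb μ γ ∈ Set.Ioo (0 : ℝ) 1 := by
  have hD := one_add_sub_one_mul_pos (Set.Ioo_subset_Icc_self hμ) hγ
  refine ⟨div_pos (mul_pos hγ hμ.1) hD, sub_pos.mp ?_⟩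
  rw [one_sub_declProb γ hD.ne']
  exact div_pos (sub_pos.mpr hμ.2) hD

theorem bhattacharyyaBernoulli_declProb (hμ : μ ∈ Set.Icc (0 : ℝ) 1) {γ₁ γ₂ : ℝ}
    (hγ₁ : 0 < γ₁) (hγ₂ : 0 < γ₂) :
    bhattacharyyaBernoulli (declProb μ γ₁) (declProb μ γ₂)
      = (μ * (√γ₁ * √γ₂) + (1 - μ)) / √((1 + (γ₁ - 1) * μ) * (1 + (γ₂ - 1) * μ)) := by
  have hD₁ := one_add_sub_one_mul_pos hμ hγ₁
  have hD₂ := one_add_sub_one_mul_pos hμ hγ₂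
  have hR := sq_sqrt (mul_pos hD₁ hD₂).le
  have hμ₀ := hμ.1
  have hμ₁ : 0 ≤ 1 - μ := sub_nonneg.mpr hμ.2
  have hpq : declProb μ γ₁ * declProb μ γ₂
      = (μ * (√γ₁ * √γ₂) / √((1 + (γ₁ - 1) * μ) * (1 + (γ₂ - 1) * μ))) ^ 2 := by
    rw [div_pow, hR, mul_pow, mul_pow, sq_sqrt hγ₁.le, sq_sqrt hγ₂.le, declProb, declProb]
    field_simp
  have hpq' : (1 - declProb μ γ₁) * (1 - declProb μ γ₂)
      = ((1 - μ) / √((1 + (γ₁ - 1) * μ) * (1 + (γ₂ - 1) * μ))) ^ 2 := by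
    rw [div_pow, hR, one_sub_declProb γ₁ hD₁.ne', one_sub_declProb γ₂ hD₂.ne']
    field_simp
  rw [bhattacharyyaBernoulli, hpq, hpq', sqrt_sq (by positivity), sqrt_sq (by positivity),
    add_div]

theorem one_sub_sq_bhattacharyyaBernoulli_declProb (hμ : μ ∈ Set.Icc (0 : ℝ) 1) {γ₁ γ₂ : ℝ}
    (hγ₁ : 0 < γ₁) (hγ₂ : 0 < γ₂) :
    1 - bhattacharyyaBernoulli (declProb μ γ₁) (declProb μ γ₂) ^ 2
      = μ * (1 - μ) * (√γ₁ - √γ₂) ^ 2 / ((1 + (γ₁ - 1) * μ) * (1 + (γ₂ - 1) * μ)) := by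
  have hD := mul_pos (one_add_sub_one_mul_pos hμ hγ₁) (one_add_sub_one_mul_pos hμ hγ₂)
  have hs := sq_sqrt hγ₁.le
  have ht := sq_sqrt hγ₂.le
  have hgap : (1 + (γ₁ - 1) * μ) * (1 + (γ₂ - 1) * μ) - (μ * (√γ₁ * √γ₂) + (1 - μ)) ^ 2
      = μ * (1 - μ) * (√γ₁ - √γ₂) ^ 2 := by
    linear_combination (-((1 - μ) * μ + μ ^ 2 * γ₂)) * hs - ((1 - μ) * μ + μ ^ 2 * √γ₁ ^ 2) * ht
  rw [bhattacharyyaBernoulli_declProb hμ hγ₁ hγ₂, div_pow, sq_sqrt hD.le, one_sub_div hD.ne',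
    hgap]

theorem one_add_sub_one_mul_mul_le_max_sq (hμ : μ ∈ Set.Icc (0 : ℝ) 1) {γ₁ γ₂ : ℝ}
    (hγ : 0 ≤ γ₁ + γ₂) :
    (1 + (γ₁ - 1) * μ) * (1 + (γ₂ - 1) * μ) ≤ max ((γ₁ + γ₂) / 2) 1 ^ 2 := by
  set M := max ((γ₁ + γ₂) / 2) 1
  have hmean : (1 + (γ₁ - 1) * μ + (1 + (γ₂ - 1) * μ)) / 2
      = (1 - μ) * 1 + μ * ((γ₁ + γ₂) / 2) := by
    ring
  have hmean_le : (1 - μ) * 1 + μ * ((γ₁ + γ₂) / 2) ≤ M := by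
    nlinarith [le_max_left ((γ₁ + γ₂) / 2) 1, le_max_right ((γ₁ + γ₂) / 2) 1, hμ.1, hμ.2]
  have hmean_nonneg : 0 ≤ (1 - μ) * 1 + μ * ((γ₁ + γ₂) / 2) := by
    nlinarith [hμ.1, hμ.2]
  calc (1 + (γ₁ - 1) * μ) * (1 + (γ₂ - 1) * μ)
      ≤ ((1 + (γ₁ - 1) * μ + (1 + (γ₂ - 1) * μ)) / 2) ^ 2 := by
        nlinarith [sq_nonneg ((γ₁ - γ₂) * μ)]
    _ ≤ M ^ 2 := by
        rw [hmean]
        gcongr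

end declProb

/-- For every `μ ∈ (0, 1)` and all `γ₁, γ₂ > 0`, the KL divergence between
the Bernoulli distributions with parameters `f(μ, γ₁)` and `f(μ, γ₂)` satisfies
`D(f(μ, γ₁) ‖ f(μ, γ₂)) ≥ (√γ₁ − √γ₂)² · μ(1 − μ) / max{(γ₁ + γ₂)/2, 1}²`. -/
theorem klBernoulli_declProb_lower_bound
    (μ γ₁ γ₂ : ℝ) (hμ : μ ∈ Set.Ioo (0 : ℝ) 1) (hγ₁ : 0 < γ₁) (hγ₂ : 0 < γ₂) :
    (Real.sqrt γ₁ - Real.sqrt γ₂) ^ 2 * (μ * (1 - μ)) / max ((γ₁ + γ₂) / 2) 1 ^ 2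
      ≤ klBernoulli (declProb μ γ₁) (declProb μ γ₂) := by
  have hμ' := Set.Ioo_subset_Icc_self hμ
  set B := bhattacharyyaBernoulli (declProb μ γ₁) (declProb μ γ₂)
  calc (√γ₁ - √γ₂) ^ 2 * (μ * (1 - μ)) / max ((γ₁ + γ₂) / 2) 1 ^ 2
      ≤ μ * (1 - μ) * (√γ₁ - √γ₂) ^ 2 / ((1 + (γ₁ - 1) * μ) * (1 + (γ₂ - 1) * μ)) := by
        rw [mul_comm]
        refine div_le_div_of_nonneg_left ?_ ?_ (one_add_sub_one_mul_mul_le_max_sq hμ' ?_)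
        · have hμ₀ := hμ.1
          have hμ₁ := sub_pos.mpr hμ.2
          positivity
        · exact mul_pos (one_add_sub_one_mul_pos hμ' hγ₁) (one_add_sub_one_mul_pos hμ' hγ₂)
        · positivity
    _ = 1 - B ^ 2 := (one_sub_sq_bhattacharyyaBernoulli_declProb hμ' hγ₁ hγ₂).symm
    _ ≤ 2 * (1 - B) := by nlinarith [sq_nonneg (1 - B)]
    _ ≤ klBernoulli (declProb μ γ₁) (declProb μ γ₂) :=
        two_mul_one_sub_bhattacharyyaBernoulli_le_klBernoulli
          (declProb_mem_Ioo hμ hγ₁) (declProb_mem_Ioo hμ hγ₂)
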